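/- Let K, B, C be real 3×3 matrices with K, B symmetric positive definite and with the 6×6 block matrix [[K, Cᵀ],[C, B]] positive definite, and let m_e, m_c ∈ ℝ and r ∈ ℝ³. Then there exist ξ, ω, g ∈ ℝ³ with |g| = 1 and a scalar λ with ω = λg, solving the system K ξ + λ Cᵀ g = m_e g and C ξ + λ B g = -m_c (r × g). -/
import Mathlib

open Matrix

open Polynomial Filter in
private lemma odd3_root_aux (p : Polynomial ℝ) (hm : p.Monic) (hd : p.natDegree = 3) :
    ∃ x, p.eval x = 0 := by
  have hne : p ≠ 0 := hm.ne_zero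
  have hd0 : 0 < p.degree := by
    rw [degree_eq_natDegree hne, hd]; exact_mod_cast Nat.succ_pos 2
  have h1 : Tendsto (fun x => p.eval x) atTop atTop :=
    p.tendsto_atTop_of_leadingCoeff_nonneg hd0 (by simp [hm.leadingCoeff])
  set q := p.comp (-X) with hq
  have hqd : q.natDegree = 3 := by
    rw [hq, natDegree_comp, hd]; simp
  have hqne : q ≠ 0 := fun h => by simp [h] at hqd
  have hqd0 : 0 < q.degree := by
    rw [degree_eq_natDegree hqne, hqd]; exact_mod_cast Nat.succ_pos 2
  have hql : q.leadingCoeff ≤ 0 := by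
    rw [hq, leadingCoeff_comp (by simp)]
    simp [hm.leadingCoeff, hd]; norm_num
  have h2' : Tendsto (fun x => q.eval x) atTop atBot :=
    q.tendsto_atBot_of_leadingCoeff_nonpos hqd0 hql
  have h2 : Tendsto (fun x => p.eval x) atBot atBot := by
    have := h2'.comp tendsto_neg_atBot_atTop
    convert this using 1
    funext x
    simp [hq, eval_comp]
  obtain ⟨a, ha⟩ := (h2.eventually (eventually_lt_atBot (0:ℝ))).exists
  obtain ⟨b, hb⟩ := (h1.eventually (eventually_gt_atTop (0:ℝ))).exists
  have hc : ContinuousOn (fun x => p.eval x) (Set.uIcc a b) :=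
    (p.continuous).continuousOn
  have h0 : (0:ℝ) ∈ Set.uIcc (p.eval a) (p.eval b) :=
    Set.mem_uIcc.mpr (Or.inl ⟨ha.le, hb.le⟩)
  obtain ⟨x, _, hx⟩ := intermediate_value_uIcc hc h0
  exact ⟨x, hx⟩

open Polynomial in
private lemma exists_real_eigen_aux (F : Matrix (Fin 3) (Fin 3) ℝ) :
    ∃ (lam : ℝ) (v : Fin 3 → ℝ), v ≠ 0 ∧ F *ᵥ v = lam • v := by
  obtain ⟨lam, hlam⟩ := odd3_root_aux F.charpoly F.charpoly_monic (by simp)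
  have hmap : (F.charmatrix).map (eval lam) = lam • (1 : Matrix (Fin 3) (Fin 3) ℝ) - F := by
    ext i j
    by_cases h : i = j
    · subst h; simp [charmatrix_apply_eq, Matrix.one_apply]
    · simp [charmatrix_apply_ne _ _ _ h, Matrix.one_apply, h]
  have hdet : (lam • (1 : Matrix (Fin 3) (Fin 3) ℝ) - F).det = 0 := by
    rw [← hmap]
    have := RingHom.map_det (evalRingHom lam) F.charmatrix
    rw [← Matrix.charpoly] at this
    simpa using this.symm.trans hlam
  obtain ⟨v, hv, hmul⟩ := Matrix.exists_mulVec_eq_zero_iff.mpr hdet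
  refine ⟨lam, v, hv, ?_⟩
  have h := hmul
  rw [Matrix.sub_mulVec, Matrix.smul_mulVec, Matrix.one_mulVec, sub_eq_zero] at h
  exact h.symm

theorem stmt5 (K B C : Matrix (Fin 3) (Fin 3) ℝ)
    (hK : K.PosDef) (hB : B.PosDef)
    (hA : (Matrix.fromBlocks K Cᵀ C B).PosDef)
    (me mc : ℝ) (r : Fin 3 → ℝ) :
    ∃ (ξ ω g : Fin 3 → ℝ) (lam : ℝ),
      g 0 ^ 2 + g 1 ^ 2 + g 2 ^ 2 = 1 ∧ ω = lam • g ∧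
      K.mulVec ξ + lam • Cᵀ.mulVec g = me • g ∧
      C.mulVec ξ + lam • B.mulVec g = -(mc • crossProduct r g) := by
  have hKdet : IsUnit K.det := isUnit_iff_ne_zero.mpr hK.det_pos.ne'
  have hKinv : Invertible K := K.invertibleOfIsUnitDet hKdet
  set M : Matrix (Fin 3) (Fin 3) ℝ := B - C * K⁻¹ * Cᵀ with hMdef
  have hblock : (fromBlocks K Cᵀ C B).det = K.det * M.det := by
    have h := det_fromBlocks₁₁ K Cᵀ C B
    rwa [Matrix.invOf_eq_nonsing_inv] at h
  have h2 : (0:ℝ) < K.det * M.det := by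
    have := hA.det_pos
    linarith [hblock]
  have hMdet : IsUnit M.det := by
    refine isUnit_iff_ne_zero.mpr fun h => ?_
    rw [h, mul_zero] at h2
    exact lt_irrefl 0 h2
  -- cross product matrix
  set X : Matrix (Fin 3) (Fin 3) ℝ := !![0, -r 2, r 1; r 2, 0, -r 0; -r 1, r 0, 0] with hXdef
  have hX : ∀ v : Fin 3 → ℝ, X *ᵥ v = crossProduct r v := by
    intro v
    funext i
    fin_cases i <;>
      simp [hXdef, Matrix.mulVec, dotProduct, crossProduct, Fin.sum_univ_three] <;> ring
  -- the eigenproblem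
  set Q : Matrix (Fin 3) (Fin 3) ℝ := mc • X + me • (C * K⁻¹) with hQdef
  obtain ⟨lam, v, hv0, hFv⟩ := exists_real_eigen_aux (-(M⁻¹ * Q))
  -- normalize v
  obtain ⟨i, hi⟩ := Function.ne_iff.mp hv0
  have hS : 0 < v 0 ^ 2 + v 1 ^ 2 + v 2 ^ 2 := by
    have h0 := sq_nonneg (v 0); have h1 := sq_nonneg (v 1); have h2 := sq_nonneg (v 2)
    have hipos : 0 < v i ^ 2 :=
      lt_of_le_of_ne (sq_nonneg _) (Ne.symm (pow_ne_zero 2 hi))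
    fin_cases i <;> dsimp at hipos <;> linarith
  set c : ℝ := (Real.sqrt (v 0 ^ 2 + v 1 ^ 2 + v 2 ^ 2))⁻¹ with hcdef
  obtain ⟨g, hgdef⟩ : ∃ g : Fin 3 → ℝ, g = c • v := ⟨_, rfl⟩
  have hgnorm : g 0 ^ 2 + g 1 ^ 2 + g 2 ^ 2 = 1 := by
    have hsq : c ^ 2 = (v 0 ^ 2 + v 1 ^ 2 + v 2 ^ 2)⁻¹ := by
      rw [hcdef, ← Real.sq_sqrt hS.le]
      rw [Real.sq_sqrt hS.le]
      rw [inv_pow, Real.sq_sqrt hS.le]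
    have : g 0 ^ 2 + g 1 ^ 2 + g 2 ^ 2 = c ^ 2 * (v 0 ^ 2 + v 1 ^ 2 + v 2 ^ 2) := by
      simp [hgdef]; ring
    rw [this, hsq, inv_mul_cancel₀ hS.ne']
  have hFg : (-(M⁻¹ * Q)) *ᵥ g = lam • g := by
    rw [hgdef, Matrix.mulVec_smul, hFv, smul_comm]
  -- key identity: Q *ᵥ g = -(lam • (M *ᵥ g))
  have hkey : Q *ᵥ g = -(lam • (M *ᵥ g)) := by
    have h := congrArg (fun w => M *ᵥ w) hFg
    simp only [Matrix.mulVec_mulVec] at h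
    rw [Matrix.mul_neg, ← Matrix.mul_assoc, Matrix.mul_nonsing_inv M hMdet,
      Matrix.one_mul, Matrix.neg_mulVec, Matrix.mulVec_smul] at h
    rw [← h, neg_neg]
  obtain ⟨ξ, hξdef⟩ : ∃ w : Fin 3 → ℝ, w = K⁻¹ *ᵥ (me • g - lam • (Cᵀ *ᵥ g)) := ⟨_, rfl⟩
  refine ⟨ξ, lam • g, g, lam, hgnorm, rfl, ?_, ?_⟩
  · rw [hξdef, Matrix.mulVec_mulVec, Matrix.mul_nonsing_inv K hKdet, Matrix.one_mulVec]
    abel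
  · have hCξ : C *ᵥ ξ = me • ((C * K⁻¹) *ᵥ g) - lam • ((C * K⁻¹ * Cᵀ) *ᵥ g) := by
      rw [hξdef, Matrix.mulVec_mulVec, Matrix.mulVec_sub, Matrix.mulVec_smul,
        Matrix.mulVec_smul, Matrix.mulVec_mulVec]
    have hQg : (mc • (X *ᵥ g)) + (me • ((C * K⁻¹) *ᵥ g))
        = -(lam • (B *ᵥ g)) + lam • ((C * K⁻¹ * Cᵀ) *ᵥ g) := by
      have h := hkey
      rw [hQdef, Matrix.add_mulVec, Matrix.smul_mulVec, Matrix.smul_mulVec,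
        hMdef, Matrix.sub_mulVec, smul_sub, neg_sub] at h
      rw [h]; abel
    rw [hCξ, ← hX g]
    funext j
    have h := congrFun hQg j
    simp only [Pi.add_apply, Pi.sub_apply, Pi.neg_apply, Pi.smul_apply, smul_eq_mul] at h ⊢
    linarith
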